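/- Let $(L,\leq,0,1)$ be a bounded lattice and $e\in L\setminus\{0,1\}$ with $I_e=\{x: x\parallel e\}$. If $I_e=\emptyset$ (i.e., every element of $L$ is comparable with $e$), and $T_e$ is a t-norm on $[0,e]$, then the operation $U_T$ defined by $U_T(x,y)=T_e(x,y)$ on $[0,e]^2$, $U_T(x,y)=1$ on $(e,1]^2$, and $U_T(x,y)=x\vee y$ otherwise, is a uninorm on $L$ with neutral element $e$. -/

import Mathlib

/-! When every element is comparable with `e`, the operation splits `L` into the two blocks
`[⊥, e]` and `(e, ⊤]`: on the lower block it is the t-norm, across the blocks it returns the upper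
argument, and on the upper block it is constantly `⊤`. Each uninorm axiom then reduces to a case
split on which block each argument lies in, and only the all-lower cases use the t-norm axioms. -/

section UninormOfTNorm

variable {L : Type*} [Lattice L] [OrderTop L] {e : L} {T : L → L → L} {x y z : L}

open Classical in
noncomputable def uninormOfTNorm (e : L) (T : L → L → L) (x y : L) : L :=
  if x ≤ e ∧ y ≤ e then T x y
  else if e < x ∧ e < y then (⊤ : L)
  else x ⊔ y

theorem uninormOfTNorm_of_le_of_le (hx : x ≤ e) (hy : y ≤ e) :
    uninormOfTNorm e T x y = T x y := by
  simp [uninormOfTNorm, hx, hy]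

theorem uninormOfTNorm_of_le_of_lt (hx : x ≤ e) (hy : e < y) :
    uninormOfTNorm e T x y = y := by
  simp [uninormOfTNorm, hy.not_ge, hx.not_gt, sup_eq_right.mpr (hx.trans hy.le)]

theorem uninormOfTNorm_of_lt_of_le (hx : e < x) (hy : y ≤ e) :
    uninormOfTNorm e T x y = x := by
  simp [uninormOfTNorm, hx.not_ge, hy.not_gt, sup_eq_left.mpr (hy.trans hx.le)]

theorem uninormOfTNorm_of_lt_of_lt (hx : e < x) (hy : e < y) :
    uninormOfTNorm e T x y = ⊤ := by
  simp [uninormOfTNorm, hx.not_ge, hx, hy]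

variable (hcomp : ∀ x, x ≤ e ∨ e < x)
include hcomp

theorem uninormOfTNorm_comm (hTcomm : ∀ x y, x ≤ e → y ≤ e → T x y = T y x) (x y : L) :
    uninormOfTNorm e T x y = uninormOfTNorm e T y x := by
  rcases hcomp x with hx | hx <;> rcases hcomp y with hy | hy
  · rw [uninormOfTNorm_of_le_of_le hx hy, uninormOfTNorm_of_le_of_le hy hx, hTcomm x y hx hy]
  · rw [uninormOfTNorm_of_le_of_lt hx hy, uninormOfTNorm_of_lt_of_le hy hx]
  · rw [uninormOfTNorm_of_lt_of_le hx hy, uninormOfTNorm_of_le_of_lt hy hx]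
  · rw [uninormOfTNorm_of_lt_of_lt hx hy, uninormOfTNorm_of_lt_of_lt hy hx]

theorem uninormOfTNorm_assoc (hTcl : ∀ x y, x ≤ e → y ≤ e → T x y ≤ e)
    (hTassoc : ∀ x y z, x ≤ e → y ≤ e → z ≤ e → T (T x y) z = T x (T y z)) (x y z : L) :
    uninormOfTNorm e T (uninormOfTNorm e T x y) z =
      uninormOfTNorm e T x (uninormOfTNorm e T y z) := by
  rcases hcomp x with hx | hx <;> rcases hcomp y with hy | hy <;> rcases hcomp z with hz | hz
  · rw [uninormOfTNorm_of_le_of_le hx hy, uninormOfTNorm_of_le_of_le (hTcl x y hx hy) hz,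
      uninormOfTNorm_of_le_of_le hy hz, uninormOfTNorm_of_le_of_le hx (hTcl y z hy hz),
      hTassoc x y z hx hy hz]
  · rw [uninormOfTNorm_of_le_of_le hx hy, uninormOfTNorm_of_le_of_lt (hTcl x y hx hy) hz,
      uninormOfTNorm_of_le_of_lt hy hz, uninormOfTNorm_of_le_of_lt hx hz]
  · rw [uninormOfTNorm_of_le_of_lt hx hy, uninormOfTNorm_of_lt_of_le hy hz,
      uninormOfTNorm_of_le_of_lt hx hy]
  · rw [uninormOfTNorm_of_le_of_lt hx hy, uninormOfTNorm_of_lt_of_lt hy hz,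
      uninormOfTNorm_of_le_of_lt hx (hy.trans_le le_top)]
  · rw [uninormOfTNorm_of_lt_of_le hx hy, uninormOfTNorm_of_lt_of_le hx hz,
      uninormOfTNorm_of_le_of_le hy hz, uninormOfTNorm_of_lt_of_le hx (hTcl y z hy hz)]
  · rw [uninormOfTNorm_of_lt_of_le hx hy, uninormOfTNorm_of_lt_of_lt hx hz,
      uninormOfTNorm_of_le_of_lt hy hz, uninormOfTNorm_of_lt_of_lt hx hz]
  · rw [uninormOfTNorm_of_lt_of_lt hx hy, uninormOfTNorm_of_lt_of_le (hx.trans_le le_top) hz,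
      uninormOfTNorm_of_lt_of_le hy hz, uninormOfTNorm_of_lt_of_lt hx hy]
  · rw [uninormOfTNorm_of_lt_of_lt hx hy, uninormOfTNorm_of_lt_of_lt (hx.trans_le le_top) hz,
      uninormOfTNorm_of_lt_of_lt hy hz, uninormOfTNorm_of_lt_of_lt hx (hy.trans_le le_top)]

theorem uninormOfTNorm_mono_left (hTcl : ∀ x y, x ≤ e → y ≤ e → T x y ≤ e)
    (hTmono : ∀ x y z, x ≤ e → y ≤ e → z ≤ e → x ≤ y → T x z ≤ T y z) (hxy : x ≤ y) :
    uninormOfTNorm e T x z ≤ uninormOfTNorm e T y z := by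
  rcases hcomp x with hx | hx <;> rcases hcomp y with hy | hy <;> rcases hcomp z with hz | hz
  · rw [uninormOfTNorm_of_le_of_le hx hz, uninormOfTNorm_of_le_of_le hy hz]
    exact hTmono x y z hx hy hz hxy
  · rw [uninormOfTNorm_of_le_of_lt hx hz, uninormOfTNorm_of_le_of_lt hy hz]
  · rw [uninormOfTNorm_of_le_of_le hx hz, uninormOfTNorm_of_lt_of_le hy hz]
    exact (hTcl x z hx hz).trans hy.le
  · rw [uninormOfTNorm_of_le_of_lt hx hz, uninormOfTNorm_of_lt_of_lt hy hz]
    exact le_top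
  · exact absurd (hx.trans_le hxy) hy.not_gt
  · exact absurd (hx.trans_le hxy) hy.not_gt
  · rwa [uninormOfTNorm_of_lt_of_le hx hz, uninormOfTNorm_of_lt_of_le hy hz]
  · rw [uninormOfTNorm_of_lt_of_lt hx hz, uninormOfTNorm_of_lt_of_lt hy hz]

theorem uninormOfTNorm_neutral (hTe : ∀ x, x ≤ e → T e x = x ∧ T x e = x) (x : L) :
    uninormOfTNorm e T e x = x ∧ uninormOfTNorm e T x e = x := by
  rcases hcomp x with hx | hx
  · rw [uninormOfTNorm_of_le_of_le le_rfl hx, uninormOfTNorm_of_le_of_le hx le_rfl]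
    exact hTe x hx
  · exact ⟨uninormOfTNorm_of_le_of_lt le_rfl hx, uninormOfTNorm_of_lt_of_le hx le_rfl⟩

end UninormOfTNorm

open Classical in
theorem stmt19_general {L : Type*} [Lattice L] [BoundedOrder L] (e : L)
    (hcomp : ∀ x : L, x ≤ e ∨ e ≤ x)
    (T : L → L → L)
    (hTcl : ∀ x y, x ≤ e → y ≤ e → T x y ≤ e)
    (hTcomm : ∀ x y, x ≤ e → y ≤ e → T x y = T y x)
    (hTassoc : ∀ x y z, x ≤ e → y ≤ e → z ≤ e → T (T x y) z = T x (T y z))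
    (hTmono : ∀ x y z, x ≤ e → y ≤ e → z ≤ e → x ≤ y → T x z ≤ T y z)
    (hTe : ∀ x, x ≤ e → T e x = x ∧ T x e = x)
    (U : L → L → L)
    (hU : ∀ x y, U x y =
      if x ≤ e ∧ y ≤ e then T x y
      else if e < x ∧ e < y then (⊤ : L)
      else x ⊔ y) :
    (∀ x y, U x y = U y x) ∧
    (∀ x y z, U (U x y) z = U x (U y z)) ∧
    (∀ x y z, x ≤ y → U x z ≤ U y z ∧ U z x ≤ U z y) ∧
    (∀ x, U e x = x ∧ U x e = x) := by
  obtain rfl : U = uninormOfTNorm e T := funext₂ hU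
  have hcases : ∀ x, x ≤ e ∨ e < x := fun x =>
    (hcomp x).elim Or.inl fun hex => hex.lt_or_eq.elim Or.inr fun h => Or.inl h.ge
  have comm := uninormOfTNorm_comm hcases hTcomm
  refine ⟨comm, uninormOfTNorm_assoc hcases hTcl hTassoc,
    fun x y z hxy => ⟨uninormOfTNorm_mono_left hcases hTcl hTmono hxy, ?_⟩,
    uninormOfTNorm_neutral hcases hTe⟩
  rw [comm z x, comm z y]
  exact uninormOfTNorm_mono_left hcases hTcl hTmono hxy

open Classical in
theorem stmt19 {L : Type*} [Lattice L] [BoundedOrder L] (e : L)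
    (he0 : e ≠ ⊥) (he1 : e ≠ ⊤)
    (hcomp : ∀ x : L, x ≤ e ∨ e ≤ x)
    (T : L → L → L)
    (hTcl : ∀ x y, x ≤ e → y ≤ e → T x y ≤ e)
    (hTcomm : ∀ x y, x ≤ e → y ≤ e → T x y = T y x)
    (hTassoc : ∀ x y z, x ≤ e → y ≤ e → z ≤ e → T (T x y) z = T x (T y z))
    (hTmono : ∀ x y z, x ≤ e → y ≤ e → z ≤ e → x ≤ y → T x z ≤ T y z)
    (hTe : ∀ x, x ≤ e → T e x = x ∧ T x e = x)
    (U : L → L → L)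
    (hU : ∀ x y, U x y =
      if x ≤ e ∧ y ≤ e then T x y
      else if e < x ∧ e < y then (⊤ : L)
      else x ⊔ y) :
    (∀ x y, U x y = U y x) ∧
    (∀ x y z, U (U x y) z = U x (U y z)) ∧
    (∀ x y z, x ≤ y → U x z ≤ U y z ∧ U z x ≤ U z y) ∧
    (∀ x, U e x = x ∧ U x e = x) :=
  stmt19_general e hcomp T hTcl hTcomm hTassoc hTmono hTe U hU
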